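/- arXiv:1807.06965 — 4 statements merged into one kernel-verified Lean document; each statement's English description precedes it below -/
import Mathlib

section
/- The star K_{1,n} (n ≥ 1) has maximum modularity equal to 0. -/
open Finset
open scoped Classical

noncomputable section

variable {V : Type*} [Fintype V]

/-- Number of edges of `G` with both endpoints in `A`. -/
def edgesIn (G : SimpleGraph V) (A : Finset V) : ℕ :=
  (G.edgeFinset.filter (fun e => ∀ v ∈ e, v ∈ A)).card

/-- Sum of degrees (in `G`) of the vertices of `A`. -/
def vol (G : SimpleGraph V) (A : Finset V) : ℕ :=
  ∑ v ∈ A, G.degree v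

/-- Number of edges of `G` with exactly one endpoint in `A`. -/
def bdry (G : SimpleGraph V) (A : Finset V) : ℕ :=
  (G.edgeFinset.filter (fun e => (∃ v ∈ e, v ∈ A) ∧ (∃ v ∈ e, v ∉ A))).card

/-- The modularity score of a vertex partition. -/
def modScore (G : SimpleGraph V) (P : Finpartition (univ : Finset V)) : ℝ :=
  (∑ A ∈ P.parts, (edgesIn G A : ℝ)) / (G.edgeFinset.card : ℝ)
    - (∑ A ∈ P.parts, (vol G A : ℝ) ^ 2) / (4 * (G.edgeFinset.card : ℝ) ^ 2)

/-- The maximum modularity of `G`. -/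
def maxMod (G : SimpleGraph V) : ℝ :=
  sSup {x : ℝ | ∃ P : Finpartition (univ : Finset V), modScore G P = x}

/-!
The partition into a single part scores `1 - (2m)² / (4m²) = 0` in every graph (for edgeless
graphs through the convention `x / 0 = 0`). Conversely,
`modScore G P = ∑ A, (e(A) / m - vol(A)² / (4m²))`, so it is nonpositive as soon as
`4 m e(A) ≤ vol(A)²` for every vertex set `A`. In `K_{α,β}`, a set with `l` vertices on the left
and `r` on the right has `e(A) = l r` and `vol(A) = |β| l + |α| r`, while `m = |α| |β|`; the
inequality is then AM-GM for `|β| l` and `|α| r`.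
-/

lemma edgesIn_univ (G : SimpleGraph V) : edgesIn G univ = #G.edgeFinset := by
  simp [edgesIn]

lemma vol_univ (G : SimpleGraph V) : vol G univ = 2 * #G.edgeFinset :=
  G.sum_degrees_eq_twice_card_edges

lemma modScore_indiscrete [Nonempty V] (G : SimpleGraph V) :
    modScore G (Finpartition.indiscrete univ_nonempty.ne_empty) = 0 := by
  rcases eq_or_ne #G.edgeFinset 0 with hm | hm
  · simp [modScore, hm]
  · simp only [modScore, Finpartition.indiscrete_parts, sum_singleton, edgesIn_univ, vol_univ,
      Nat.cast_mul, Nat.cast_ofNat]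
    field_simp
    ring

lemma modScore_nonpos_of_four_mul_edgesIn_le (G : SimpleGraph V)
    (P : Finpartition (univ : Finset V))
    (h : ∀ A, 4 * #G.edgeFinset * edgesIn G A ≤ vol G A ^ 2) : modScore G P ≤ 0 := by
  have hsum : 4 * (#G.edgeFinset : ℝ) * ∑ A ∈ P.parts, (edgesIn G A : ℝ) ≤
      ∑ A ∈ P.parts, (vol G A : ℝ) ^ 2 := by
    rw [mul_sum]
    exact sum_le_sum fun A _ => mod_cast h A
  rw [modScore, sub_nonpos]
  rcases (#G.edgeFinset).eq_zero_or_pos with hm | hm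
  · simp [hm]
  · rw [div_le_div_iff₀ (by positivity) (by positivity)]
    nlinarith

lemma maxMod_eq_zero_of_four_mul_edgesIn_le [Nonempty V] (G : SimpleGraph V)
    (h : ∀ A, 4 * #G.edgeFinset * edgesIn G A ≤ vol G A ^ 2) : maxMod G = 0 :=
  IsGreatest.csSup_eq ⟨⟨_, modScore_indiscrete G⟩, by
    rintro _ ⟨P, rfl⟩
    exact modScore_nonpos_of_four_mul_edgesIn_le G P h⟩

section completeBipartiteGraph

variable {α β : Type*} [Fintype α] [Fintype β]

@[simps]
def completeBipartiteEdgeEmbedding : α × β ↪ Sym2 (α ⊕ β) :=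
  ⟨fun x => s(.inl x.1, .inr x.2), fun x y h => by simpa [Sym2.eq_iff, Prod.ext_iff] using h⟩

lemma edgeFinset_completeBipartiteGraph :
    (completeBipartiteGraph α β).edgeFinset = univ.map completeBipartiteEdgeEmbedding := by
  apply coe_injective
  simp [SimpleGraph.edgeSet_completeBipartiteGraph]

lemma card_edgeFinset_completeBipartiteGraph :
    #(completeBipartiteGraph α β).edgeFinset = Fintype.card α * Fintype.card β := by
  simp [edgeFinset_completeBipartiteGraph]

lemma degree_completeBipartiteGraph_inl (a : α) :
    (completeBipartiteGraph α β).degree (.inl a) = Fintype.card β := by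
  have : (completeBipartiteGraph α β).neighborFinset (.inl a) = univ.map .inr := by
    ext (v | v) <;> simp
  rw [← SimpleGraph.card_neighborFinset_eq_degree, this, card_map, card_univ]

lemma degree_completeBipartiteGraph_inr (b : β) :
    (completeBipartiteGraph α β).degree (.inr b) = Fintype.card α := by
  have : (completeBipartiteGraph α β).neighborFinset (.inr b) = univ.map .inl := by
    ext (v | v) <;> simp
  rw [← SimpleGraph.card_neighborFinset_eq_degree, this, card_map, card_univ]

lemma vol_completeBipartiteGraph (A : Finset (α ⊕ β)) :
    vol (completeBipartiteGraph α β) A =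
      Fintype.card β * #A.toLeft + Fintype.card α * #A.toRight := by
  rw [vol, ← toLeft_disjSum_toRight (u := A), sum_disjSum]
  simp [degree_completeBipartiteGraph_inl, degree_completeBipartiteGraph_inr, mul_comm]

lemma edgesIn_completeBipartiteGraph (A : Finset (α ⊕ β)) :
    edgesIn (completeBipartiteGraph α β) A = #A.toLeft * #A.toRight := by
  rw [edgesIn, edgeFinset_completeBipartiteGraph, filter_congr_decidable, filter_map, card_map,
    ← card_product]
  congr 1
  ext ⟨a, b⟩
  simp

lemma four_mul_edgesIn_completeBipartiteGraph_le (A : Finset (α ⊕ β)) :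
    4 * #(completeBipartiteGraph α β).edgeFinset * edgesIn (completeBipartiteGraph α β) A ≤
      vol (completeBipartiteGraph α β) A ^ 2 := by
  rw [card_edgeFinset_completeBipartiteGraph, edgesIn_completeBipartiteGraph,
    vol_completeBipartiteGraph]
  calc 4 * (Fintype.card α * Fintype.card β) * (#A.toLeft * #A.toRight)
      _ = 4 * (Fintype.card β * #A.toLeft) * (Fintype.card α * #A.toRight) := by ring
      _ ≤ _ := four_mul_le_sq_add _ _

theorem maxMod_completeBipartiteGraph [Nonempty (α ⊕ β)] :
    maxMod (completeBipartiteGraph α β) = 0 :=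
  maxMod_eq_zero_of_four_mul_edgesIn_le _ four_mul_edgesIn_completeBipartiteGraph_le

end completeBipartiteGraph

theorem maxMod_star_general (n : ℕ) :
    maxMod (completeBipartiteGraph (Fin 1) (Fin n)) = 0 :=
  maxMod_completeBipartiteGraph

/-- The star `K_{1,n}` (`n ≥ 1`) has maximum modularity 0. -/
theorem maxMod_star (n : ℕ) (hn : 1 ≤ n) :
    maxMod (completeBipartiteGraph (Fin 1) (Fin n)) = 0 :=
  maxMod_star_general n

end
end

section
/- Let G be a graph with m ≥ 1 edges and no isolated vertices. If 𝒜 is a partition of V(G) achieving the maximum modularity q*(G), then no part of 𝒜 consists of a single vertex. -/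
open Finset
open scoped Classical

noncomputable section

variable {V : Type*} [Fintype V]

/-!
Merging a singleton part `{v}` into another part `B` changes the modularity by
`(2m·e(v,B) − d(v)·vol(B)) / (2m²)`, where `e(v,B)` is the number of neighbours of `v` in `B`.
Over all parts `B ≠ {v}` these numerators sum to `2m·d(v) − d(v)·(2m − d(v)) = d(v)² > 0`,
so some merge strictly increases the modularity, contradicting optimality.
-/

namespace Finpartition

section Merge

variable {α : Type*} [DistribLattice α] [OrderBot α] [DecidableEq α] {a b c : α}

def merge (P : Finpartition a) (hb : b ∈ P.parts) (hc : c ∈ P.parts) : Finpartition a where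
  parts := insert (b ⊔ c) (P.parts \ {b, c})
  supIndep := by
    rw [Finset.supIndep_iff_pairwiseDisjoint]
    have hdisj : ∀ d ∈ P.parts \ {b, c}, Disjoint (b ⊔ c) d := by
      intro d hd
      simp only [mem_sdiff, mem_insert, mem_singleton, not_or] at hd
      exact disjoint_sup_left.2
        ⟨P.disjoint hb hd.1 (Ne.symm hd.2.1), P.disjoint hc hd.1 (Ne.symm hd.2.2)⟩
    rw [coe_insert]
    refine (P.supIndep.pairwiseDisjoint.subset ?_).insert fun d hd _ => hdisj d hd
    exact fun d hd => (mem_sdiff.1 hd).1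
  sup_parts := by
    have h := P.sup_parts
    rw [← union_sdiff_of_subset (insert_subset hb (singleton_subset_iff.2 hc)), sup_union] at h
    simpa [sup_insert, sup_assoc] using h
  bot_notMem := by
    rw [mem_insert, not_or]
    exact ⟨fun h => P.ne_bot hb (le_bot_iff.1 (h ▸ le_sup_left)),
      fun h => P.bot_notMem (mem_sdiff.1 h).1⟩

lemma sum_merge_add {M : Type*} [AddCommMonoid M] (P : Finpartition a) (hb : b ∈ P.parts)
    (hc : c ∈ P.parts) (hbc : b ≠ c) (f : α → M) :
    ∑ p ∈ (P.merge hb hc).parts, f p + (f b + f c) = ∑ p ∈ P.parts, f p + f (b ⊔ c) := by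
  have hsup : b ⊔ c ∉ P.parts \ {b, c} := by
    intro h
    simp only [mem_sdiff, mem_insert, mem_singleton, not_or] at h
    exact P.ne_bot hb (disjoint_self.1 ((P.disjoint hb h.1 (Ne.symm h.2.1)).mono_right le_sup_left))
  rw [merge, sum_insert hsup, ← sum_sdiff (insert_subset hb (singleton_subset_iff.2 hc)),
    sum_pair hbc]
  abel

end Merge

lemma sum_sum_parts {α M : Type*} [DecidableEq α] [AddCommMonoid M] {s : Finset α}
    (P : Finpartition s) (g : α → M) : ∑ C ∈ P.parts, ∑ w ∈ C, g w = ∑ w ∈ s, g w := by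
  conv_rhs => rw [← P.biUnion_parts]
  exact (sum_biUnion P.supIndep.pairwiseDisjoint).symm

end Finpartition

namespace SimpleGraph

variable (G : SimpleGraph V)

lemma edgesIn_singleton (v : V) : edgesIn G {v} = 0 := by
  rw [edgesIn, card_eq_zero, eq_empty_iff_forall_notMem]
  intro e
  induction e using Sym2.ind with
  | _ a b =>
    simp only [mem_filter, mem_edgeFinset, mem_edgeSet, Sym2.mem_iff, mem_singleton,
      forall_eq_or_imp, forall_eq]
    rintro ⟨hab, rfl, rfl⟩
    exact G.irrefl hab

lemma edgesIn_insert {v : V} {B : Finset V} (hv : v ∉ B) :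
    edgesIn G (insert v B) = edgesIn G B + #(G.neighborFinset v ∩ B) := by
  have hsplit : G.edgeFinset.filter (fun e => ∀ w ∈ e, w ∈ insert v B) =
      G.edgeFinset.filter (fun e => ∀ w ∈ e, w ∈ B) ∪
        (G.neighborFinset v ∩ B).image (fun w => s(v, w)) := by
    ext e
    induction e using Sym2.ind with
    | _ a b =>
      simp only [mem_filter, mem_union, mem_image, mem_inter, mem_neighborFinset, mem_edgeFinset,
        mem_edgeSet, Sym2.mem_iff, mem_insert, forall_eq_or_imp, forall_eq, Sym2.eq_iff]
      constructor
      · rintro ⟨hab, rfl | ha, rfl | hb⟩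
        · exact (G.irrefl hab).elim
        · exact Or.inr ⟨b, ⟨hab, hb⟩, Or.inl ⟨rfl, rfl⟩⟩
        · exact Or.inr ⟨a, ⟨hab.symm, ha⟩, Or.inr ⟨rfl, rfl⟩⟩
        · exact Or.inl ⟨hab, ha, hb⟩
      · rintro (⟨hab, ha, hb⟩ | ⟨w, ⟨hvw, hw⟩, ⟨rfl, rfl⟩ | ⟨rfl, rfl⟩⟩)
        · exact ⟨hab, Or.inr ha, Or.inr hb⟩
        · exact ⟨hvw, Or.inl rfl, Or.inr hw⟩
        · exact ⟨hvw.symm, Or.inr hw, Or.inl rfl⟩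
  have hdisj : Disjoint (G.edgeFinset.filter (fun e => ∀ w ∈ e, w ∈ B))
      ((G.neighborFinset v ∩ B).image (fun w => s(v, w))) := by
    rw [Finset.disjoint_left]
    rintro _ he hmem
    obtain ⟨w, -, rfl⟩ := mem_image.1 hmem
    exact hv ((mem_filter.1 he).2 v (Sym2.mem_mk_left v w))
  rw [edgesIn, edgesIn, hsplit, card_union_of_disjoint hdisj,
    card_image_of_injective _ fun _ _ => Sym2.congr_right.mp]

lemma vol_singleton (v : V) : vol G {v} = G.degree v :=
  sum_singleton _ _

lemma vol_union {A B : Finset V} (h : Disjoint A B) : vol G (A ∪ B) = vol G A + vol G B :=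
  sum_union h

lemma sum_vol_parts (P : Finpartition (univ : Finset V)) :
    ∑ C ∈ P.parts, vol G C = 2 * #G.edgeFinset := by
  simp only [vol, P.sum_sum_parts, sum_degrees_eq_twice_card_edges]

lemma sum_card_neighborFinset_inter_parts (P : Finpartition (univ : Finset V)) (v : V) :
    ∑ C ∈ P.parts, #(G.neighborFinset v ∩ C) = G.degree v := by
  calc ∑ C ∈ P.parts, #(G.neighborFinset v ∩ C)
      = ∑ C ∈ P.parts, ∑ w ∈ C, if G.Adj v w then 1 else 0 := by
        refine sum_congr rfl fun C _ => ?_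
        rw [sum_boole, Nat.cast_id]
        congr 1
        ext w
        simp [and_comm]
    _ = G.degree v := by
        rw [P.sum_sum_parts, sum_boole, Nat.cast_id, ← card_neighborFinset_eq_degree,
          neighborFinset_eq_filter]

lemma modScore_le_maxMod (P : Finpartition (univ : Finset V)) : modScore G P ≤ maxMod G :=
  le_csSup (Set.finite_range _).bddAbove ⟨P, rfl⟩

lemma modScore_merge {P : Finpartition (univ : Finset V)} {A B : Finset V} (hA : A ∈ P.parts)
    (hB : B ∈ P.parts) (hAB : A ≠ B) :
    modScore G (P.merge hA hB) = modScore G P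
      + ((edgesIn G (A ∪ B) : ℝ) - edgesIn G A - edgesIn G B) / #G.edgeFinset
      - 2 * vol G A * vol G B / (4 * (#G.edgeFinset : ℝ) ^ 2) := by
  have hE := P.sum_merge_add hA hB hAB (fun C => (edgesIn G C : ℝ))
  have hV := P.sum_merge_add hA hB hAB (fun C => (vol G C : ℝ) ^ 2)
  rw [sup_eq_union] at hE hV
  rw [G.vol_union (A := A) (B := B) (P.disjoint hA hB hAB)] at hV
  rw [modScore, modScore, eq_sub_of_add_eq hE, eq_sub_of_add_eq hV]
  push_cast
  ring

lemma modScore_lt_modScore_merge_singleton {P : Finpartition (univ : Finset V)} {v : V}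
    {B : Finset V} (hv : {v} ∈ P.parts) (hB : B ∈ P.parts) (hvB : {v} ≠ B)
    (hgain : G.degree v * vol G B < 2 * #G.edgeFinset * #(G.neighborFinset v ∩ B)) :
    modScore G P < modScore G (P.merge hv hB) := by
  have hvB' : v ∉ B := disjoint_singleton_left.1 (P.disjoint hv hB hvB)
  have hm : (0 : ℝ) < #G.edgeFinset := by
    exact_mod_cast Nat.pos_of_ne_zero fun h => by simp [h] at hgain
  have hgain' : (G.degree v : ℝ) * vol G B < 2 * #G.edgeFinset * #(G.neighborFinset v ∩ B) := by
    exact_mod_cast hgain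
  rw [G.modScore_merge hv hB hvB, ← insert_eq, G.edgesIn_insert hvB', G.edgesIn_singleton,
    G.vol_singleton, Nat.cast_add, Nat.cast_zero, sub_zero, add_sub_cancel_left, add_sub_assoc,
    lt_add_iff_pos_right, sub_pos, div_lt_div_iff₀ (by positivity) hm]
  nlinarith

lemma exists_part_merge_gain {P : Finpartition (univ : Finset V)} {v : V} (hv : {v} ∈ P.parts)
    (hd : 0 < G.degree v) :
    ∃ B ∈ P.parts, {v} ≠ B ∧
      G.degree v * vol G B < 2 * #G.edgeFinset * #(G.neighborFinset v ∩ B) := by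
  have hsum : ∑ C ∈ P.parts, G.degree v * vol G C
      = ∑ C ∈ P.parts, 2 * #G.edgeFinset * #(G.neighborFinset v ∩ C) := by
    rw [← mul_sum, ← mul_sum, G.sum_vol_parts, G.sum_card_neighborFinset_inter_parts, mul_comm]
  rw [← add_sum_erase _ _ hv, ← add_sum_erase _ _ hv, G.vol_singleton,
    inter_singleton_of_notMem (G.notMem_neighborFinset_self v), card_empty, mul_zero,
    zero_add] at hsum
  obtain ⟨B, hB, hlt⟩ : ∃ B ∈ P.parts.erase {v},
      G.degree v * vol G B < 2 * #G.edgeFinset * #(G.neighborFinset v ∩ B) :=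
    exists_lt_of_sum_lt (by nlinarith [Nat.mul_pos hd hd])
  exact ⟨B, mem_of_mem_erase hB, (ne_of_mem_erase hB).symm, hlt⟩

end SimpleGraph

theorem no_singleton_part_general (G : SimpleGraph V)
    (hiso : ∀ v : V, 0 < G.degree v) (P : Finpartition (univ : Finset V))
    (hopt : modScore G P = maxMod G) :
    ∀ A ∈ P.parts, A.card ≠ 1 := by
  intro A hA hcard
  obtain ⟨v, rfl⟩ := card_eq_one.mp hcard
  obtain ⟨B, hB, hvB, hgain⟩ := G.exists_part_merge_gain hA (hiso v)
  have hlt := G.modScore_lt_modScore_merge_singleton hA hB hvB hgain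
  have hle := G.modScore_le_maxMod (P.merge hA hB)
  linarith

/-- In a graph with no isolated vertices, no part of an optimal partition is a
single vertex. -/
theorem no_singleton_part (G : SimpleGraph V) (hm : 1 ≤ G.edgeFinset.card)
    (hiso : ∀ v : V, 0 < G.degree v) (P : Finpartition (univ : Finset V))
    (hopt : modScore G P = maxMod G) :
    ∀ A ∈ P.parts, A.card ≠ 1 :=
  no_singleton_part_general G hiso P hopt

end
end

section
/- Let G be a graph with m ≥ 1 edges, 𝒜 = {{u}, A₁, …, A_k} a partition of V(G) with u a singleton part, and for each i let ℬᵢ be the partition obtained from 𝒜 by merging {u} into Aᵢ. Then q_{ℬᵢ}(G) − q_𝒜(G) = (1/m)·e({u},Aᵢ) − (1/(2m²))·d_u·vol(Aᵢ), where e({u},Aᵢ) is the number of edges from u to Aᵢ and d_u is the degree of u. -/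
/-! Merging two parts of a partition changes only the terms of those two parts in each sum of
the modularity. For the parts `{u}` and `A`, the edges inside `{u} ∪ A` are those inside `A`
together with the `e({u}, A)` edges from `u` into `A`, and since the volume is additive,
`vol({u} ∪ A)² - d_u² - vol(A)² = 2 d_u vol(A)`. -/

open Finset
open scoped Classical

noncomputable section

variable {V : Type*} [Fintype V]

namespace Finpartition

variable {α : Type*} [Lattice α] [OrderBot α] [DecidableEq α] {a : α} (P : Finpartition a)
  {b c : α}

theorem sup_notMem_parts_erase (hb : b ∈ P.parts) : b ⊔ c ∉ P.parts.erase b := by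
  intro h
  obtain ⟨hne, hmem⟩ := mem_erase.mp h
  have hdisj : Disjoint (b ⊔ c) b := P.disjoint hmem hb hne
  exact P.ne_bot hb (hdisj.eq_bot_of_ge le_sup_left)

theorem sum_parts_sub_sum_parts_of_merge {M : Type*} [AddCommGroup M] (f : α → M)
    (Q : Finpartition a)
    (hb : b ∈ P.parts) (hc : c ∈ P.parts) (hbc : b ≠ c)
    (hQ : Q.parts = insert (b ⊔ c) ((P.parts.erase b).erase c)) :
    ∑ d ∈ Q.parts, f d - ∑ d ∈ P.parts, f d = f (b ⊔ c) - f b - f c := by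
  have hc' : c ∈ P.parts.erase b := mem_erase.mpr ⟨hbc.symm, hc⟩
  rw [hQ, sum_insert fun h => P.sup_notMem_parts_erase hb (mem_of_mem_erase h),
    ← add_sum_erase _ f hb, ← add_sum_erase _ f hc']
  abel

end Finpartition

theorem edgesIn_singleton (G : SimpleGraph V) (u : V) : edgesIn G {u} = 0 := by
  rw [edgesIn, card_eq_zero, filter_eq_empty_iff]
  intro e he hsub
  induction e using Sym2.ind with
  | _ a b =>
    have ha := mem_singleton.mp (hsub a (Sym2.mem_mk_left a b))
    have hb := mem_singleton.mp (hsub b (Sym2.mem_mk_right a b))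
    exact G.ne_of_adj (SimpleGraph.mem_edgeFinset.mp he) (ha.trans hb.symm)

theorem filter_edgeFinset_mem_insert_of_notMem (G : SimpleGraph V) {u : V} {A : Finset V}
    (hu : u ∉ A) :
    (G.edgeFinset.filter fun e => ∀ v ∈ e, v ∈ insert u A).filter (fun e => u ∉ e) =
      G.edgeFinset.filter fun e => ∀ v ∈ e, v ∈ A := by
  ext e
  simp only [mem_filter, mem_insert]
  constructor
  · rintro ⟨⟨he, hsub⟩, hue⟩
    exact ⟨he, fun v hv => (hsub v hv).resolve_left (by rintro rfl; exact hue hv)⟩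
  · rintro ⟨he, hsub⟩
    exact ⟨⟨he, fun v hv => Or.inr (hsub v hv)⟩, fun hue => hu (hsub u hue)⟩

theorem filter_edgeFinset_mem_insert_of_mem (G : SimpleGraph V) {u : V} {A : Finset V} :
    (G.edgeFinset.filter fun e => ∀ v ∈ e, v ∈ insert u A).filter (fun e => u ∈ e) =
      (A.filter (G.Adj u)).map (Sym2.mkEmbedding u) := by
  ext e
  simp only [mem_filter, mem_map, mem_insert, SimpleGraph.mem_edgeFinset]
  constructor
  · rintro ⟨⟨he, hsub⟩, hue⟩
    obtain ⟨v, rfl⟩ := Sym2.mem_iff_exists.mp hue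
    have huv : G.Adj u v := he
    have hvA : v ∈ A := (hsub v (Sym2.mem_mk_right u v)).resolve_left huv.ne'
    exact ⟨v, ⟨hvA, huv⟩, rfl⟩
  · rintro ⟨v, ⟨hvA, huv⟩, rfl⟩
    refine ⟨⟨huv, fun w hw => ?_⟩, Sym2.mem_mk_left u v⟩
    rcases Sym2.mem_iff.mp hw with rfl | rfl
    · exact Or.inl rfl
    · exact Or.inr hvA

theorem edgesIn_insert (G : SimpleGraph V) {u : V} {A : Finset V} (hu : u ∉ A) :
    edgesIn G (insert u A) = edgesIn G A + #(A.filter (G.Adj u)) := by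
  rw [edgesIn, edgesIn, ← card_filter_add_card_filter_not (fun e => u ∈ e),
    filter_edgeFinset_mem_insert_of_notMem G hu, filter_edgeFinset_mem_insert_of_mem,
    card_map, add_comm]

theorem vol_union (G : SimpleGraph V) {A B : Finset V} (h : Disjoint A B) :
    vol G (A ∪ B) = vol G A + vol G B :=
  sum_union h

theorem modScore_sub_modScore_of_merge (G : SimpleGraph V)
    {P Q : Finpartition (univ : Finset V)} {A B : Finset V}
    (hA : A ∈ P.parts) (hB : B ∈ P.parts) (hAB : A ≠ B)
    (hQ : Q.parts = insert (A ∪ B) ((P.parts.erase A).erase B)) :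
    modScore G Q - modScore G P =
      ((edgesIn G (A ∪ B) : ℝ) - edgesIn G A - edgesIn G B) / #G.edgeFinset
        - 2 * (vol G A : ℝ) * vol G B / (4 * (#G.edgeFinset : ℝ) ^ 2) := by
  have hsum := fun f : Finset V → ℝ => P.sum_parts_sub_sum_parts_of_merge f Q hA hB hAB hQ
  have hvol : vol G (A ∪ B) = vol G A + vol G B := vol_union G (P.disjoint hA hB hAB)
  simp only [modScore, sup_eq_union] at hsum ⊢
  rw [sub_sub_sub_comm, ← sub_div, ← sub_div, hsum, hsum, hvol]
  push_cast
  ring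

theorem merge_singleton_modularity_general (G : SimpleGraph V)
    (u : V) (A : Finset V) (P Q : Finpartition (univ : Finset V))
    (hu : {u} ∈ P.parts) (hA : A ∈ P.parts) (hne : A ≠ {u})
    (hQ : Q.parts = insert (insert u A) ((P.parts.erase {u}).erase A)) :
    modScore G Q - modScore G P =
      (1 / (G.edgeFinset.card : ℝ)) * ((A.filter (G.Adj u)).card : ℝ) -
        (1 / (2 * (G.edgeFinset.card : ℝ) ^ 2)) * (G.degree u : ℝ) * (vol G A : ℝ) := by
  have huA : u ∉ A := fun h => hne (P.eq_of_mem_parts hA hu h (mem_singleton_self u))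
  rw [insert_eq] at hQ
  rw [modScore_sub_modScore_of_merge G hu hA hne.symm hQ, ← insert_eq, edgesIn_insert G huA,
    edgesIn_singleton]
  simp only [vol, sum_singleton]
  push_cast
  ring

/-- Merging a singleton part `{u}` into a part `A` changes the modularity by
`(1/m)·e({u},A) - (1/(2m²))·d_u·vol(A)`. -/
theorem merge_singleton_modularity (G : SimpleGraph V) (hm : 1 ≤ G.edgeFinset.card)
    (u : V) (A : Finset V) (P Q : Finpartition (univ : Finset V))
    (hu : {u} ∈ P.parts) (hA : A ∈ P.parts) (hne : A ≠ {u})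
    (hQ : Q.parts = insert (insert u A) ((P.parts.erase {u}).erase A)) :
    modScore G Q - modScore G P =
      (1 / (G.edgeFinset.card : ℝ)) * ((A.filter (G.Adj u)).card : ℝ) -
        (1 / (2 * (G.edgeFinset.card : ℝ) ^ 2)) * (G.degree u : ℝ) * (vol G A : ℝ) :=
  merge_singleton_modularity_general G u A P Q hu hA hne hQ

end
end

section
/- Let G have m ≥ 1 edges and connected components C₁,…,C_ℓ. Then q*(G) = ∑_{i=1}^ℓ q*(Cᵢ, G), where q*(H, G) is the maximum over partitions 𝒜_H of V(H) of (1/m)∑_{A∈𝒜_H} e(A) − (1/(4m²))∑_{A∈𝒜_H} vol_G(A)². -/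
open Finset
open scoped Classical

noncomputable section

variable {V : Type*} [Fintype V]

/-- `q*(H,G)`: maximum contribution to modularity over partitions of a vertex
subset `S`, with edge counts and volumes computed in `G`. -/
def qStarOn (G : SimpleGraph V) (S : Finset V) : ℝ :=
  sSup {x : ℝ | ∃ P : Finpartition S,
    x = (∑ A ∈ P.parts, (edgesIn G A : ℝ)) / (G.edgeFinset.card : ℝ)
        - (∑ A ∈ P.parts, (vol G A : ℝ) ^ 2) / (4 * (G.edgeFinset.card : ℝ) ^ 2)}

/-!
Every edge of `G` lies inside a single connected component. Hence cutting a community `A`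
along the components leaves its edge count unchanged, while its volume term can only drop,
since `∑ vol(A ∩ Cᵢ)² ≤ (∑ vol(A ∩ Cᵢ))² = vol(A)²`. Restricting an optimal partition of
`V(G)` to the components therefore gives partitions of the components whose scores sum to
at least `q*(G)`; conversely, optimal partitions of the components combine into a partition
of `V(G)` scoring `∑ q*(Cᵢ, G)`.
-/

def communityScore (G : SimpleGraph V) (A : Finset V) : ℝ :=
  (edgesIn G A : ℝ) / (G.edgeFinset.card : ℝ)
    - (vol G A : ℝ) ^ 2 / (4 * (G.edgeFinset.card : ℝ) ^ 2)

section Score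

variable (G : SimpleGraph V)

lemma sum_communityScore (𝒜 : Finset (Finset V)) :
    ∑ A ∈ 𝒜, communityScore G A
      = (∑ A ∈ 𝒜, (edgesIn G A : ℝ)) / (G.edgeFinset.card : ℝ)
        - (∑ A ∈ 𝒜, (vol G A : ℝ) ^ 2) / (4 * (G.edgeFinset.card : ℝ) ^ 2) := by
  simp only [communityScore, sum_sub_distrib, sum_div]

@[simp]
lemma edgesIn_empty : edgesIn G ∅ = 0 := by
  refine card_eq_zero.2 (filter_eq_empty_iff.2 fun e _ he => ?_)
  induction e using Sym2.ind with
  | h u v => exact notMem_empty u (he u (Sym2.mem_mk_left u v))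

@[simp]
lemma communityScore_empty : communityScore G ∅ = 0 := by
  simp [communityScore, vol]

lemma qStarOn_eq_sSup_range (S : Finset V) :
    qStarOn G S
      = sSup (Set.range fun P : Finpartition S => ∑ A ∈ P.parts, communityScore G A) := by
  simp only [qStarOn, sum_communityScore, Set.range, eq_comm]

lemma sum_communityScore_le_qStarOn {S : Finset V} (P : Finpartition S) :
    ∑ A ∈ P.parts, communityScore G A ≤ qStarOn G S := by
  rw [qStarOn_eq_sSup_range]
  exact le_csSup (Set.finite_range _).bddAbove ⟨P, rfl⟩

lemma exists_sum_communityScore_eq_qStarOn (S : Finset V) :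
    ∃ P : Finpartition S, ∑ A ∈ P.parts, communityScore G A = qStarOn G S := by
  rw [qStarOn_eq_sSup_range]
  exact (Set.range_nonempty _).csSup_mem (Set.finite_range _)

lemma maxMod_eq_qStarOn_univ : maxMod G = qStarOn G univ := by
  simp only [maxMod, qStarOn, modScore, eq_comm]

end Score

section EdgeClosedCover

open Function

variable (G : SimpleGraph V) {ι : Type*} [Fintype ι] {s : ι → Finset V}

lemma vol_eq_sum_inter (hs : Pairwise (Disjoint on s)) {A : Finset V} (hA : A ⊆ univ.sup s) :
    vol G A = ∑ i, vol G (A ∩ s i) := by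
  have hsplit : univ.biUnion (fun i => A ∩ s i) = A := by
    rw [← inter_biUnion, ← sup_eq_biUnion, inter_eq_left.2 hA]
  conv_lhs => rw [vol, ← hsplit]
  exact sum_biUnion fun i _ j _ hij => (hs hij).mono inter_subset_right inter_subset_right

lemma edgesIn_eq_sum_inter (hs : Pairwise (Disjoint on s))
    (hclosed : ∀ i, ∀ u ∈ s i, ∀ v, G.Adj u v → v ∈ s i) {A : Finset V} (hA : A ⊆ univ.sup s) :
    edgesIn G A = ∑ i, edgesIn G (A ∩ s i) := by
  simp only [edgesIn]
  rw [← card_biUnion]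
  · congr 1
    ext e
    induction e using Sym2.ind with
    | h u v =>
      simp only [mem_biUnion, mem_filter, mem_univ, true_and, Sym2.mem_iff, forall_eq_or_imp,
        forall_eq, mem_inter, SimpleGraph.mem_edgeFinset, SimpleGraph.mem_edgeSet]
      constructor
      · rintro ⟨huv, hu, hv⟩
        obtain ⟨i, -, hui⟩ := mem_sup.1 (hA hu)
        exact ⟨i, huv, ⟨hu, hui⟩, hv, hclosed i u hui v huv⟩
      · rintro ⟨i, huv, ⟨hu, -⟩, hv, -⟩
        exact ⟨huv, hu, hv⟩
  · intro i _ j _ hij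
    refine disjoint_left.2 fun e hei hej => ?_
    induction e using Sym2.ind with
    | h u v =>
      simp only [mem_filter, Sym2.mem_iff, forall_eq_or_imp, forall_eq, mem_inter] at hei hej
      exact disjoint_left.1 (hs hij) hei.2.1.2 hej.2.1.2

lemma communityScore_le_sum_inter (hs : Pairwise (Disjoint on s))
    (hclosed : ∀ i, ∀ u ∈ s i, ∀ v, G.Adj u v → v ∈ s i) {A : Finset V} (hA : A ⊆ univ.sup s) :
    communityScore G A ≤ ∑ i, communityScore G (A ∩ s i) := by
  have hvol : ∑ i, (vol G (A ∩ s i) : ℝ) ^ 2 ≤ (vol G A : ℝ) ^ 2 := by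
    rw [vol_eq_sum_inter G hs hA, Nat.cast_sum]
    exact sum_sq_le_sq_sum_of_nonneg fun i _ => Nat.cast_nonneg _
  have hedges : (edgesIn G A : ℝ) = ∑ i, (edgesIn G (A ∩ s i) : ℝ) :=
    mod_cast edgesIn_eq_sum_inter G hs hclosed hA
  simp only [communityScore, sum_sub_distrib, ← sum_div, ← hedges]
  exact sub_le_sub_left (div_le_div_of_nonneg_right hvol (by positivity)) _

theorem qStarOn_sup_eq_sum (hs : Pairwise (Disjoint on s))
    (hclosed : ∀ i, ∀ u ∈ s i, ∀ v, G.Adj u v → v ∈ s i) :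
    qStarOn G (univ.sup s) = ∑ i, qStarOn G (s i) := by
  apply le_antisymm
  · obtain ⟨P, hP⟩ := exists_sum_communityScore_eq_qStarOn G (univ.sup s)
    calc qStarOn G (univ.sup s)
        = ∑ A ∈ P.parts, communityScore G A := hP.symm
      _ ≤ ∑ A ∈ P.parts, ∑ i, communityScore G (A ∩ s i) :=
          sum_le_sum fun A hA => communityScore_le_sum_inter G hs hclosed (P.le hA)
      _ = ∑ i, ∑ B ∈ (P.restrict (le_sup (mem_univ i))).parts, communityScore G B := by
          rw [sum_comm]
          exact sum_congr rfl fun i _ =>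
            (P.sum_restrict _ _ (communityScore_empty G)).symm
      _ ≤ ∑ i, qStarOn G (s i) :=
          sum_le_sum fun i _ => sum_communityScore_le_qStarOn G _
  · choose P hP using fun i => exists_sum_communityScore_eq_qStarOn G (s i)
    have hindep : (univ : Finset ι).SupIndep s :=
      supIndep_iff_pairwiseDisjoint.2 fun i _ j _ hij => hs hij
    calc ∑ i, qStarOn G (s i)
        = ∑ i, ∑ B ∈ (P i).parts, communityScore G B := sum_congr rfl fun i _ => (hP i).symm
      _ = ∑ B ∈ (Finpartition.combine P hindep).parts, communityScore G B :=
          (Finpartition.sum_combine P hindep _).symm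
      _ ≤ qStarOn G (univ.sup s) := sum_communityScore_le_qStarOn G _

end EdgeClosedCover

theorem maxMod_eq_sum_components_general (G : SimpleGraph V) :
    maxMod G = ∑ C : G.ConnectedComponent, qStarOn G C.supp.toFinset := by
  have hcover : univ.sup (fun C : G.ConnectedComponent => C.supp.toFinset) = univ :=
    eq_univ_of_forall fun v => mem_sup.2 ⟨G.connectedComponentMk v, mem_univ _, by simp⟩
  rw [maxMod_eq_qStarOn_univ, ← hcover]
  refine qStarOn_sup_eq_sum G (fun C C' h => ?_) fun C u hu v huv => ?_
  · simpa [Function.onFun] using G.pairwise_disjoint_supp_connectedComponent h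
  · simpa using (C.mem_supp_congr_adj huv).1 (by simpa using hu)

/-- The maximum modularity of `G` is the sum over its connected components of
the maximum modularity contribution of each component. -/
theorem maxMod_eq_sum_components (G : SimpleGraph V) (hm : 1 ≤ G.edgeFinset.card) :
    maxMod G = ∑ C : G.ConnectedComponent, qStarOn G C.supp.toFinset :=
  maxMod_eq_sum_components_general G

end
end
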